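/- Let λ(x) = exp(2πi a x/n) be an additive character of Z/nZ with d = gcd(a,n), and χ a multiplicative character of (Z/nZ)* with conductor f. If f ∤ n/d then G(Z/nZ, χ, λ) = 0; if f | n/d then G(Z/nZ, χ, λ) = (φ(n)/φ(n/d)) · G(Z/(n/d)Z, χ', λ), where χ' is the character of (Z/(n/d)Z)* induced by χ. -/

import Mathlib

/-
Write `π : (ℤ/nℤ)ˣ → (ℤ/(n/d)ℤ)ˣ` for reduction. As `d = gcd(a, n)`, `λ(x)` only depends on
`x mod n/d`, so the Gauss sum has the shape `∑ₓ χ(x) ψ(π x)`. By the characterisation of the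
conductor, `f ∤ n/d` means that `χ` is nontrivial on `ker π`; shifting the sum by some `c ∈ ker π`
with `χ(c) ≠ 1` multiplies it by `χ(c)`, so it vanishes. Otherwise `χ = χ' ∘ π`, and since `π` is
a surjective homomorphism, every fibre has `|ker π| = φ(n)/φ(n/d)` elements.
-/

open scoped BigOperators

noncomputable def addChar (N : ℕ) (a : ℤ) (v : ℕ) : ℂ :=
  Complex.exp (2 * Real.pi * Complex.I * a * v / N)

theorem addChar_eq_of_dvd {N : ℕ} {a : ℤ} {v w : ℕ} (h : (N : ℤ) ∣ a * (w - v)) :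
    addChar N a v = addChar N a w := by
  obtain ⟨k, hk⟩ := h
  rcases eq_or_ne N 0 with rfl | hN
  · simp [addChar] -- division by `0` makes both sides `exp 0`
  have hkC := congrArg (Int.cast : ℤ → ℂ) hk
  push_cast at hkC
  have hexp : 2 * Real.pi * Complex.I * a * w / N
      = 2 * Real.pi * Complex.I * a * v / N + k * (2 * Real.pi * Complex.I) := by
    field_simp
    linear_combination hkC
  rw [addChar, addChar, hexp, Complex.exp_add, Complex.exp_int_mul_two_pi_mul_I, mul_one]

theorem addChar_mod_div_gcd (N : ℕ) (a : ℤ) (v : ℕ) :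
    addChar N a (v % (N / Int.gcd a N)) = addChar N a v := by
  apply addChar_eq_of_dvd
  obtain ⟨a', ha'⟩ := Int.gcd_dvd_left a N
  have hN := congrArg (Nat.cast : ℕ → ℤ)
    (Nat.mul_div_cancel' (by exact_mod_cast Int.gcd_dvd_right a N : Int.gcd a N ∣ N))
  have hv := congrArg (Nat.cast : ℕ → ℤ) (Nat.div_add_mod v (N / Int.gcd a N))
  simp only [Nat.cast_add, Nat.cast_mul] at hN hv
  refine ⟨a' * (v / (N / Int.gcd a N) : ℕ), ?_⟩
  linear_combination (↑v - ↑(v % (N / Int.gcd a N)) : ℤ) * ha' - (Int.gcd a N * a' : ℤ) * hv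
    + (a' * (v / (N / Int.gcd a N) : ℕ) : ℤ) * hN

theorem addChar_val_unitsMap (n : ℕ) [NeZero n] (a : ℤ) (h : n / Int.gcd a n ∣ n)
    (x : (ZMod n)ˣ) :
    addChar n a (ZMod.unitsMap h x : ZMod (n / Int.gcd a n)).val
      = addChar n a (x : ZMod n).val := by
  rw [ZMod.unitsMap_val, ZMod.cast_eq_val, ZMod.val_natCast, addChar_mod_div_gcd]

namespace MonoidHom

variable {G H : Type*} [Group G] [Group H] [Fintype G]

open Finset in
theorem sum_comp_of_surjective [Fintype H] {M : Type*} [AddCommMonoid M] (f : G →* H)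
    (hf : Function.Surjective f) (g : H → M) :
    ∑ x, g (f x) = Nat.card f.ker • ∑ y, g y := by
  classical
  rw [← sum_fiberwise univ f, smul_sum]
  refine sum_congr rfl fun y _ => ?_
  calc ∑ x with f x = y, g (f x) = ∑ x with f x = y, g y :=
        sum_congr rfl fun x hx => by rw [(mem_filter.mp hx).2]
    _ = #{x | f x = y} • g y := sum_const _
    _ = Nat.card f.ker • g y := by
        rw [card_fiber_eq_of_mem_range f (hf y) ⟨1, map_one f⟩]
        simp [Nat.card_eq_fintype_card, Fintype.card_subtype]

theorem card_eq_card_ker_mul_of_surjective [Fintype H] (f : G →* H) (hf : Function.Surjective f) :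
    Fintype.card G = Nat.card f.ker * Fintype.card H := by
  simpa using f.sum_comp_of_surjective hf (fun _ => (1 : ℕ))

theorem sum_mul_comp_eq_zero_of_not_ker_le {R : Type*} [CommRing R] [IsDomain R]
    (χ : G →* Rˣ) (f : G →* H) (hker : ¬ f.ker ≤ χ.ker) (g : H → R) :
    ∑ x, (χ x : R) * g (f x) = 0 := by
  obtain ⟨c, hcf, hcχ⟩ := SetLike.not_le_iff_exists.mp hker
  have hshift : ∑ x, (χ x : R) * g (f x) = χ c * ∑ x, (χ x : R) * g (f x) := by
    conv_lhs => rw [← Equiv.sum_comp (Equiv.mulLeft c)]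
    rw [Finset.mul_sum]
    refine Finset.sum_congr rfl fun x _ => ?_
    rw [Equiv.coe_mulLeft, map_mul, map_mul, f.mem_ker.mp hcf, one_mul, Units.val_mul, mul_assoc]
  have hc : (χ c : R) - 1 ≠ 0 := sub_ne_zero.mpr fun h => hcχ (Units.val_eq_one.mp h)
  exact (mul_eq_zero.mp (by linear_combination -hshift : ((χ c : R) - 1) * _ = 0)).resolve_left hc

end MonoidHom

theorem DirichletCharacter.conductor_dvd_iff_ker_unitsMap_le {R : Type*} [CommMonoidWithZero R]
    {n m : ℕ} [NeZero n] (χ : DirichletCharacter R n) (hm : m ∣ n) :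
    χ.conductor ∣ m ↔ (ZMod.unitsMap hm).ker ≤ χ.toUnitHom.ker := by
  rw [← mem_conductorSet_iff_conductor_dvd χ hm, mem_conductorSet_iff,
    factorsThrough_iff_ker_unitsMap hm]

theorem ZMod.totient_eq_card_ker_unitsMap_mul {n m : ℕ} [NeZero n] [NeZero m] (hm : m ∣ n) :
    n.totient = Nat.card (ZMod.unitsMap hm).ker * m.totient := by
  rw [← ZMod.card_units_eq_totient, ← ZMod.card_units_eq_totient]
  exact (ZMod.unitsMap hm).card_eq_card_ker_mul_of_surjective (ZMod.unitsMap_surjective hm)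

/-- Let `λ(x) = exp(2πi a x/n)` with `d = gcd(a,n)` and let `χ` be a multiplicative
character of `(ℤ/nℤ)*` with conductor `f`.  If `f ∤ n/d` then `G(ℤ/nℤ, χ, λ) = 0`;
if `f ∣ n/d`, so that `χ` is induced by a character `χ'` modulo `n/d`, then
`G(ℤ/nℤ, χ, λ) = (φ(n)/φ(n/d)) · G(ℤ/(n/d)ℤ, χ', λ)`. -/
theorem gauss_sum_zmod_reduction (n : ℕ) [NeZero n] (a : ℤ) (d : ℕ)
    (hd : d = Int.gcd a n) [NeZero (n / d)] (hdvd : n / d ∣ n)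
    (χ : DirichletCharacter ℂ n) :
    (¬ χ.conductor ∣ n / d →
      (∑ x : (ZMod n)ˣ, χ x * addChar n a (x : ZMod n).val) = 0) ∧
    (χ.conductor ∣ n / d →
      ∀ χ' : DirichletCharacter ℂ (n / d),
        χ = DirichletCharacter.changeLevel hdvd χ' →
        (∑ x : (ZMod n)ˣ, χ x * addChar n a (x : ZMod n).val) =
          ((Nat.totient n : ℂ) / (Nat.totient (n / d) : ℂ)) *
            ∑ x : (ZMod (n / d))ˣ, χ' x * addChar n a (x : ZMod (n / d)).val) := by
  subst hd
  set ψ : (ZMod (n / Int.gcd a n))ˣ → ℂ := fun y => addChar n a (y : ZMod (n / Int.gcd a n)).val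
  have hsum : ∀ χ₀ : DirichletCharacter ℂ n,
      ∑ x : (ZMod n)ˣ, χ₀ x * addChar n a (x : ZMod n).val
        = ∑ x, (χ₀.toUnitHom x : ℂ) * ψ (ZMod.unitsMap hdvd x) := fun χ₀ =>
    Finset.sum_congr rfl fun x _ => by rw [MulChar.coe_toUnitHom, ← addChar_val_unitsMap n a hdvd x]
  refine ⟨fun hχ => ?_, fun _ χ' hχ => ?_⟩
  · rw [hsum]
    exact MonoidHom.sum_mul_comp_eq_zero_of_not_ker_le _ _
      ((χ.conductor_dvd_iff_ker_unitsMap_le hdvd).not.mp hχ) ψ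
  · have hφ : ((n / Int.gcd a n).totient : ℂ) ≠ 0 := by
      exact_mod_cast (Nat.totient_pos.mpr (Nat.pos_of_ne_zero (NeZero.ne _))).ne'
    rw [hsum, hχ, DirichletCharacter.changeLevel_toUnitHom,
      Finset.sum_congr rfl fun x _ => by rw [MonoidHom.comp_apply],
      MonoidHom.sum_comp_of_surjective _ (ZMod.unitsMap_surjective hdvd)
        (fun y => (χ'.toUnitHom y : ℂ) * ψ y),
      nsmul_eq_mul, ZMod.totient_eq_card_ker_unitsMap_mul hdvd, Nat.cast_mul,
      mul_div_cancel_right₀ _ hφ]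
    simp only [MulChar.coe_toUnitHom, ψ]
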